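/- For the BH (linear step-up) procedure with independent p-values, null p-values Uniform[0,1], the FDR equals exactly q·m_0/m, where m_0 is the number of true nulls. -/

import Mathlib

/-! The false discovery proportion splits over the true nulls as
`∑ i ∈ I₀, ∑ k, 1{R = k, P i ≤ k q / m} / k`. On the event `P i ≤ k q / m` the number of
rejections `R` does not change when `P i` is replaced by `0`, and the count `R⁽ⁱ⁾` obtained that
way is a function of the other p-values, hence independent of `P i`. Therefore
`ℙ(R = k, P i ≤ k q / m) = (k q / m) ℙ(R⁽ⁱ⁾ = k)`, and since `R⁽ⁱ⁾ ≥ 1` always, each true null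
contributes `∑ k, (q / m) ℙ(R⁽ⁱ⁾ = k) = q / m`. -/

open MeasureTheory ProbabilityTheory

/-- Order statistics: `orderStat p k` is the (k+1)-st smallest of the values `p`. -/
noncomputable def orderStat {m : ℕ} (p : Fin m → ℝ) : Fin m → ℝ :=
  fun k => p (Tuple.sort p k)

/-- Number of rejections of the BH (linear step-up) procedure at level q:
k = max{i : p_{(i)} ≤ iq/m} (0 if no such i). -/
noncomputable def bhCount (m : ℕ) (q : ℝ) (p : Fin m → ℝ) : ℕ :=
  sSup {i : ℕ | i = 0 ∨ ∃ h : i - 1 < m, orderStat p ⟨i - 1, h⟩ ≤ (i : ℝ) * q / (m : ℝ)}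

/-- Number of falsely rejected (true null) hypotheses for BH: H_i is rejected iff
P_i ≤ Rq/m, i.e. iff P_i is among the R smallest p-values. -/
noncomputable def bhFalseRejCount (m : ℕ) (q : ℝ) (I₀ : Finset (Fin m))
    (p : Fin m → ℝ) : ℕ :=
  (I₀.filter fun i => p i ≤ (bhCount m q p : ℝ) * q / (m : ℝ)).card

/-- FDR of the BH procedure: E[(V/R) 1_{R>0}]. -/
noncomputable def bhFDR {Ω : Type*} [MeasurableSpace Ω] (μ : Measure Ω)
    (m : ℕ) (q : ℝ) (I₀ : Finset (Fin m)) (P : Fin m → Ω → ℝ) : ℝ :=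
  ∫ ω, (if 0 < bhCount m q (fun i => P i ω) then
    (bhFalseRejCount m q I₀ (fun i => P i ω) : ℝ) / (bhCount m q (fun i => P i ω) : ℝ)
    else 0) ∂μ

open Finset

noncomputable def countLE {m : ℕ} (p : Fin m → ℝ) (c : ℝ) : ℕ := #{j | p j ≤ c}

noncomputable def bhThreshold (m : ℕ) (q : ℝ) (k : ℕ) : ℝ := k * q / m

theorem Monotone.apply_le_iff_lt_card_filter {α : Type*} [LinearOrder α] {m : ℕ}
    {f : Fin m → α} (hf : Monotone f) (k : Fin m) (t : α) :
    f k ≤ t ↔ (k : ℕ) < #{j | f j ≤ t} := by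
  constructor
  · intro hk
    calc (k : ℕ) < #(Iic k) := by rw [Fin.card_Iic]; omega
      _ ≤ #{j | f j ≤ t} := card_le_card fun j hj ↦ by
          simpa using (hf (mem_Iic.mp hj)).trans hk
  · intro hk
    by_contra! htk
    have : #{j | f j ≤ t} ≤ #(Iio k) := card_le_card fun j hj ↦ by
      simp only [mem_filter, mem_univ, true_and] at hj
      exact mem_Iio.mpr (lt_of_not_ge fun hkj ↦ (htk.trans_le (hf hkj)).not_ge hj)
    rw [Fin.card_Iio] at this
    omega

theorem orderStat_le_iff {m : ℕ} (p : Fin m → ℝ) (k : Fin m) (t : ℝ) :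
    orderStat p k ≤ t ↔ (k : ℕ) < countLE p t := by
  rw [orderStat, ← Function.comp_apply (f := p),
    (Tuple.monotone_sort p).apply_le_iff_lt_card_filter, countLE,
    card_equiv (Tuple.sort p) (t := {j | p j ≤ t}) (by simp)]

section BH

variable {m : ℕ} {q : ℝ}

def bhLevels (m : ℕ) (q : ℝ) (p : Fin m → ℝ) : Set ℕ :=
  {k | k = 0 ∨ k ≤ m ∧ k ≤ countLE p (bhThreshold m q k)}

theorem bhCount_eq_sSup_bhLevels (p : Fin m → ℝ) : bhCount m q p = sSup (bhLevels m q p) := by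
  unfold bhCount bhLevels bhThreshold
  congr 1
  ext k
  rcases Nat.eq_zero_or_pos k with rfl | hk
  · simp
  simp only [Set.mem_ofPred_eq, hk.ne', false_or]
  constructor
  · rintro ⟨hkm, hle⟩
    have := (orderStat_le_iff p _ _).mp hle
    exact ⟨by omega, by simp only at this; omega⟩
  · rintro ⟨hkm, hle⟩
    exact ⟨by omega, (orderStat_le_iff p _ _).mpr (by simp only; omega)⟩

theorem bddAbove_bhLevels (p : Fin m → ℝ) : BddAbove (bhLevels m q p) :=
  ⟨m, fun _ hk ↦ hk.elim (· ▸ m.zero_le) And.left⟩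

theorem bhCount_mem_bhLevels (p : Fin m → ℝ) : bhCount m q p ∈ bhLevels m q p := by
  rw [bhCount_eq_sSup_bhLevels]
  exact Nat.sSup_mem ⟨0, Or.inl rfl⟩ (bddAbove_bhLevels p)

theorem le_bhCount {p : Fin m → ℝ} {k : ℕ} (hk : k ∈ bhLevels m q p) : k ≤ bhCount m q p := by
  rw [bhCount_eq_sSup_bhLevels]
  exact le_csSup (bddAbove_bhLevels p) hk

theorem bhCount_le (p : Fin m → ℝ) : bhCount m q p ≤ m :=
  (bhCount_mem_bhLevels p).elim (· ▸ m.zero_le) And.left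

theorem bhThreshold_nonneg (hq : 0 ≤ q) (k : ℕ) : 0 ≤ bhThreshold m q k := by
  unfold bhThreshold; positivity

theorem bhThreshold_monotone (hq : 0 ≤ q) : Monotone (bhThreshold m q) := fun _ _ h ↦ by
  unfold bhThreshold; gcongr

theorem countLE_le_countLE_update (p : Fin m → ℝ) (i : Fin m) {x c : ℝ} (hx : x ≤ c) :
    countLE p c ≤ countLE (Function.update p i x) c := by
  refine card_le_card fun j ↦ ?_
  rcases eq_or_ne j i with rfl | hj <;> simp_all

theorem countLE_update_of_le (p : Fin m → ℝ) (i : Fin m) {x c : ℝ} (hx : x ≤ c)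
    (hi : p i ≤ c) : countLE (Function.update p i x) c = countLE p c := by
  unfold countLE
  congr 1
  refine filter_congr fun j _ ↦ ?_
  rcases eq_or_ne j i with rfl | hj <;> simp_all

theorem bhCount_le_bhCount_update_zero (hq : 0 ≤ q) (p : Fin m → ℝ) (i : Fin m) :
    bhCount m q p ≤ bhCount m q (Function.update p i 0) := by
  refine le_bhCount ((bhCount_mem_bhLevels p).imp_right fun ⟨hm, hle⟩ ↦ ⟨hm, ?_⟩)
  exact hle.trans (countLE_le_countLE_update p i (bhThreshold_nonneg hq _))

theorem bhCount_update_zero_le_of_le (hq : 0 ≤ q) (p : Fin m → ℝ) (i : Fin m)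
    (hi : p i ≤ bhThreshold m q (bhCount m q (Function.update p i 0))) :
    bhCount m q (Function.update p i 0) ≤ bhCount m q p := by
  refine le_bhCount ((bhCount_mem_bhLevels _).imp_right fun ⟨hm, hle⟩ ↦ ⟨hm, ?_⟩)
  rwa [← countLE_update_of_le p i (bhThreshold_nonneg hq _) hi]

theorem bhCount_eq_and_le_iff (hq : 0 ≤ q) (p : Fin m → ℝ) (i : Fin m) (k : ℕ) :
    (bhCount m q p = k ∧ p i ≤ bhThreshold m q k) ↔
      (bhCount m q (Function.update p i 0) = k ∧ p i ≤ bhThreshold m q k) := by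
  have hle := bhCount_le_bhCount_update_zero hq p i
  constructor
  · rintro ⟨rfl, hi⟩
    refine ⟨le_antisymm (bhCount_update_zero_le_of_le hq p i ?_) hle, hi⟩
    exact hi.trans (bhThreshold_monotone hq hle)
  · rintro ⟨hk, hi⟩
    exact ⟨hk ▸ le_antisymm hle (bhCount_update_zero_le_of_le hq p i (hk ▸ hi)), hi⟩

theorem one_le_bhCount_update_zero (hq : 0 ≤ q) (p : Fin m → ℝ) (i : Fin m) :
    1 ≤ bhCount m q (Function.update p i 0) := by
  refine le_bhCount (Or.inr ⟨i.pos, card_pos.mpr ⟨i, ?_⟩⟩)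
  simpa using bhThreshold_nonneg hq 1

theorem measurable_countLE (c : ℝ) : Measurable fun p : Fin m → ℝ ↦ countLE p c := by
  simp_rw [countLE, card_filter]
  exact Finset.measurable_sum _ fun j _ ↦
    Measurable.ite (measurableSet_le (measurable_pi_apply j) measurable_const)
      measurable_const measurable_const

theorem measurable_bhCount : Measurable (bhCount m q) := by
  have h : bhCount m q =
      (fun v : Fin (m + 1) → ℕ ↦ sSup {k | k = 0 ∨ ∃ h : k < m + 1, k ≤ v ⟨k, h⟩}) ∘
        fun p k ↦ countLE p (bhThreshold m q k) := by
    funext p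
    simp only [bhCount_eq_sSup_bhLevels, bhLevels, Function.comp_apply, Nat.lt_succ_iff,
      exists_prop]
  rw [h]
  exact (measurable_of_countable _).comp (measurable_pi_lambda _ fun k ↦ measurable_countLE _)

end BH

theorem ProbabilityTheory.iIndepFun.indepFun_update {Ω ι β : Type*} [MeasurableSpace Ω]
    [MeasurableSpace β] [DecidableEq ι] {μ : Measure Ω} {X : ι → Ω → β} (hX : iIndepFun X μ)
    (hmeas : ∀ j, Measurable (X j)) (i : ι) (x : β) :
    IndepFun (X i) (fun ω ↦ Function.update (fun j ↦ X j ω) i x) μ := by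
  rw [IndepFun_iff_Indep]
  have h := indep_biSup_compl (fun j ↦ (hmeas j).comap_le) hX.iIndep {i}
  refine indep_of_indep_of_le_right (indep_of_indep_of_le_left h ?_) (Measurable.comap_le ?_)
  · exact le_iSup₂ (f := fun j (_ : j ∈ ({i} : Set ι)) ↦ MeasurableSpace.comap (X j) _) i rfl
  · refine @measurable_pi_lambda _ _ _ (⨆ j ∈ ({i} : Set ι)ᶜ, MeasurableSpace.comap (X j) _) _ _
      fun j ↦ ?_
    rcases eq_or_ne j i with rfl | hj
    · simp
    · simp only [Function.update_of_ne hj]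
      exact (comap_measurable (X j)).mono
        (le_iSup₂ (f := fun j (_ : j ∈ ({i} : Set ι)ᶜ) ↦ MeasurableSpace.comap (X j) _) j hj)
        le_rfl

theorem measureReal_setOf_le_of_map_eq_uniform {Ω : Type*} [MeasurableSpace Ω] {μ : Measure Ω}
    {X : Ω → ℝ} (hX : Measurable X) (hunif : μ.map X = volume.restrict (Set.Icc 0 1)) {c : ℝ}
    (hc0 : 0 ≤ c) (hc1 : c ≤ 1) : μ.real {ω | X ω ≤ c} = c := by
  have hIic : Set.Iic c ∩ Set.Icc 0 1 = Set.Icc 0 c := by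
    ext x
    simp only [Set.mem_inter_iff, Set.mem_Iic, Set.mem_Icc]
    grind
  change μ.real (X ⁻¹' Set.Iic c) = c
  rw [measureReal_def, ← Measure.map_apply hX measurableSet_Iic,
    hunif, Measure.restrict_apply measurableSet_Iic, hIic, Real.volume_Icc, sub_zero,
    ENNReal.toReal_ofReal hc0]

section FDR

variable {Ω : Type*} {m : ℕ} {q : ℝ} {P : Fin m → Ω → ℝ}

def bhRejectEvent (m : ℕ) (q : ℝ) (P : Fin m → Ω → ℝ) (i : Fin m) (k : ℕ) : Set Ω :=
  {ω | bhCount m q (fun j ↦ P j ω) = k ∧ P i ω ≤ bhThreshold m q k}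

theorem fdp_eq_sum_indicator (I₀ : Finset (Fin m)) (ω : Ω) :
    (if 0 < bhCount m q (fun i ↦ P i ω) then
      (bhFalseRejCount m q I₀ (fun i ↦ P i ω) : ℝ) / bhCount m q (fun i ↦ P i ω) else 0) =
      ∑ i ∈ I₀, ∑ k ∈ Icc 1 m, (bhRejectEvent m q P i k).indicator (fun _ ↦ (k : ℝ)⁻¹) ω := by
  have hR : bhCount m q (fun i ↦ P i ω) ∈ Icc 1 m ↔ 0 < bhCount m q (fun i ↦ P i ω) := by
    simpa [Nat.one_le_iff_ne_zero, Nat.pos_iff_ne_zero] using fun _ ↦ bhCount_le (q := q) _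
  simp only [Set.indicator_apply, bhRejectEvent, Set.mem_ofPred_eq, ite_and, sum_ite_eq, hR]
  split_ifs
  · rw [← sum_filter, sum_const, nsmul_eq_mul, div_eq_mul_inv]
    rfl
  · simp

variable [MeasurableSpace Ω] {μ : Measure Ω}

theorem measurableSet_bhRejectEvent (hmeas : ∀ j, Measurable (P j)) (i : Fin m) (k : ℕ) :
    MeasurableSet (bhRejectEvent m q P i k) :=
  (measurable_bhCount.comp (measurable_pi_lambda _ hmeas) (measurableSet_singleton k)).inter
    (measurableSet_le (hmeas i) measurable_const)

theorem measureReal_bhRejectEvent (hq0 : 0 ≤ q) (hq1 : q ≤ 1) (hmeas : ∀ j, Measurable (P j))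
    (hindep : iIndepFun P μ) {i : Fin m}
    (hunif : μ.map (P i) = volume.restrict (Set.Icc (0 : ℝ) 1)) {k : ℕ} (hk : k ≤ m) :
    μ.real (bhRejectEvent m q P i k) =
      bhThreshold m q k * μ.real {ω | bhCount m q (Function.update (fun j ↦ P j ω) i 0) = k} := by
  have hc1 : bhThreshold m q k ≤ 1 := by
    rw [bhThreshold, div_le_one (by exact_mod_cast i.pos)]
    calc (k : ℝ) * q ≤ k := mul_le_of_le_one_right k.cast_nonneg hq1
      _ ≤ m := by exact_mod_cast hk
  have hevent : bhRejectEvent m q P i k =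
      P i ⁻¹' Set.Iic (bhThreshold m q k) ∩
        (fun ω ↦ Function.update (fun j ↦ P j ω) i 0) ⁻¹' (bhCount m q ⁻¹' {k}) := by
    ext ω
    simp [bhRejectEvent, bhCount_eq_and_le_iff hq0 _ i k, and_comm]
  rw [hevent, measureReal_def, (hindep.indepFun_update hmeas i 0).measure_inter_preimage_eq_mul _ _
    measurableSet_Iic (measurable_bhCount (measurableSet_singleton k)), ENNReal.toReal_mul,
    ← measureReal_def, ← measureReal_def]
  exact congrArg (· * _) (measureReal_setOf_le_of_map_eq_uniform (hmeas i) hunif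
    (bhThreshold_nonneg hq0 k) hc1)

theorem integral_sum_indicator_bhRejectEvent (hq0 : 0 ≤ q) (hq1 : q ≤ 1)
    (hmeas : ∀ j, Measurable (P j)) (hindep : iIndepFun P μ) {i : Fin m}
    (hunif : μ.map (P i) = volume.restrict (Set.Icc (0 : ℝ) 1)) :
    ∫ ω, ∑ k ∈ Icc 1 m, (bhRejectEvent m q P i k).indicator (fun _ ↦ (k : ℝ)⁻¹) ω ∂μ = q / m := by
  have := hindep.isProbabilityMeasure
  set R' : Ω → ℕ := fun ω ↦ bhCount m q (Function.update (fun j ↦ P j ω) i 0)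
  have hR' : Measurable R' := measurable_bhCount.comp
    (measurable_update'.comp ((measurable_pi_lambda _ hmeas).prodMk measurable_const))
  have hR'_mem : R' ⁻¹' ↑(Icc 1 m) = Set.univ :=
    Set.eq_univ_of_forall fun ω ↦ by
      simpa using ⟨one_le_bhCount_update_zero hq0 _ i, bhCount_le _⟩
  calc _
    _ = ∑ k ∈ Icc 1 m, μ.real (bhRejectEvent m q P i k) * (k : ℝ)⁻¹ := by
      rw [integral_finsetSum _ fun k _ ↦
        (integrable_const _).indicator (measurableSet_bhRejectEvent hmeas i k)]
      simp_rw [integral_indicator_const _ (measurableSet_bhRejectEvent hmeas i _), smul_eq_mul]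
    _ = ∑ k ∈ Icc 1 m, q / m * μ.real (R' ⁻¹' {k}) := by
      refine sum_congr rfl fun k hk ↦ ?_
      have hk := mem_Icc.mp hk
      rw [measureReal_bhRejectEvent hq0 hq1 hmeas hindep hunif hk.2, mul_right_comm, bhThreshold,
        mul_div_assoc, mul_comm (k : ℝ), mul_inv_cancel_right₀ (Nat.cast_ne_zero.mpr (by omega))]
      rfl
    _ = q / m := by
      rw [← mul_sum, sum_measureReal_preimage_singleton _
        fun k _ ↦ hR' (measurableSet_singleton k), hR'_mem, probReal_univ, mul_one]

end FDR

theorem stmt_17_general {Ω : Type*} [MeasurableSpace Ω] (μ : Measure Ω)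
    (m : ℕ) (q : ℝ) (hq0 : 0 < q) (hq1 : q ≤ 1)
    (P : Fin m → Ω → ℝ) (hmeas : ∀ i, Measurable (P i))
    (hindep : iIndepFun P μ)
    (I₀ : Finset (Fin m))
    (hunif : ∀ i ∈ I₀, μ.map (P i) = volume.restrict (Set.Icc (0 : ℝ) 1)) :
    bhFDR μ m q I₀ P = q * (I₀.card : ℝ) / (m : ℝ) := by
  have := hindep.isProbabilityMeasure
  rw [bhFDR, integral_congr_ae (.of_forall (fdp_eq_sum_indicator I₀)),
    integral_finsetSum _ fun i _ ↦ integrable_finsetSum _ fun k _ ↦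
      (integrable_const _).indicator (measurableSet_bhRejectEvent hmeas i k),
    sum_congr rfl fun i hi ↦
      integral_sum_indicator_bhRejectEvent hq0.le hq1 hmeas hindep (hunif i hi),
    sum_const, nsmul_eq_mul]
  ring

/-- For the BH procedure with independent p-values, the null ones Uniform[0,1],
the FDR equals exactly q·m₀/m. -/
theorem stmt_17 {Ω : Type*} [MeasurableSpace Ω] (μ : Measure Ω) [IsProbabilityMeasure μ]
    (m : ℕ) (hm : 1 ≤ m) (q : ℝ) (hq0 : 0 < q) (hq1 : q ≤ 1)
    (P : Fin m → Ω → ℝ) (hmeas : ∀ i, Measurable (P i))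
    (hrange : ∀ i ω, P i ω ∈ Set.Icc (0 : ℝ) 1)
    (hindep : iIndepFun P μ)
    (I₀ : Finset (Fin m))
    (hunif : ∀ i ∈ I₀, μ.map (P i) = volume.restrict (Set.Icc (0 : ℝ) 1)) :
    bhFDR μ m q I₀ P = q * (I₀.card : ℝ) / (m : ℝ) :=
  stmt_17_general μ m q hq0 hq1 P hmeas hindep I₀ hunif
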